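/- Consider the switch graph with vertex set {C₀, C₁, …, C_n, A, B} (for n ≥ 1) defined by: s₀(C₀) = A; s₀(C_i) = C₀ for 1 ≤ i ≤ n; s₁(C_i) = C_{i+1} for 0 ≤ i < n; s₁(C_n) = B; s₀(A) = s₁(A) = C₀; s₀(B) = s₁(B) = B. Let N be the first step at which the train run from C₀ has position B. Then the switch assignment at step N is identically 0, i.e., every switch has returned to its initial state 0. -/

import Mathlib

open scoped Classical

variable {V : Type*}

/-- One step of the train: move along the edge given by the current switch state
and toggle the switch at the current vertex. -/
def step [DecidableEq V] (s0 s1 : V → V) (c : V × (V → Bool)) : V × (V → Bool) :=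
  (if c.2 c.1 then s1 c.1 else s0 c.1, Function.update c.2 c.1 (!c.2 c.1))

/-- The train run from `u`: iterate the step map starting with all switches `0`. -/
def run [DecidableEq V] (s0 s1 : V → V) (u : V) (k : ℕ) : V × (V → Bool) :=
  (step s0 s1)^[k] (u, fun _ => false)

lemma step_apply [DecidableEq V] (s0 s1 : V → V) (v : V) (f : V → Bool) :
    step s0 s1 (v, f) = (if f v then s1 v else s0 v, Function.update f v (!f v)) := rfl

lemma run_succ [DecidableEq V] (s0 s1 : V → V) (u : V) (k : ℕ) :
    run s0 s1 u (k + 1) = step s0 s1 (run s0 s1 u k) :=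
  Function.iterate_succ_apply' _ _ _

/-- Bits of `m+1` in terms of bits of `m`, when the trailing ones of `m` are exactly
`0, …, j-1`. -/
lemma tb_succ (j : ℕ) : ∀ m, (∀ k < j, m.testBit k = true) → m.testBit j = false →
    ∀ k, (m + 1).testBit k = (decide (k = j) || (decide (j < k) && m.testBit k)) := by
  induction j with
  | zero =>
    intro m h0 hj k
    have hm : m % 2 = 0 := by
      rw [Nat.testBit_zero] at hj
      simp at hj; omega
    cases k with
    | zero => simp [Nat.testBit_zero]; omega
    | succ k =>
      have hd : (m + 1) / 2 = m / 2 := by omega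
      rw [Nat.testBit_succ, hd, ← Nat.testBit_succ]
      simp
  | succ j ih =>
    intro m h0 hj k
    have hm : m % 2 = 1 := by
      have := h0 0 (Nat.succ_pos j)
      rw [Nat.testBit_zero] at this
      simpa using this
    have key := ih (m / 2)
      (fun k hk => by
        have := h0 (k + 1) (by omega)
        rwa [Nat.testBit_succ] at this)
      (by rwa [Nat.testBit_succ] at hj)
    cases k with
    | zero =>
      have h2 : (m + 1) % 2 = 0 := by omega
      simp [Nat.testBit_zero, h2]
    | succ k =>
      have hd : (m + 1) / 2 = m / 2 + 1 := by omega
      rw [Nat.testBit_succ, hd, key k, Nat.testBit_succ]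
      have e1 : decide (k = j) = decide (k + 1 = j + 1) := by
        simp only [decide_eq_decide]; omega
      have e2 : decide (j < k) = decide (j + 1 < k + 1) := by
        simp only [decide_eq_decide]; omega
      rw [e1, e2]

/-- If all bits `0, …, n` of `m` are set, then `m ≥ 2^(n+1) - 1`. -/
lemma ge_of_allbits : ∀ (n m : ℕ), (∀ k ≤ n, m.testBit k = true) → 2 ^ (n + 1) - 1 ≤ m := by
  intro n
  induction n with
  | zero =>
    intro m h
    have := h 0 le_rfl
    rw [Nat.testBit_zero] at this
    simp at this
    omega
  | succ n ih =>
    intro m h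
    have h0 : m % 2 = 1 := by
      have := h 0 (by omega)
      rw [Nat.testBit_zero] at this
      simpa using this
    have := ih (m / 2) (fun k hk => by
      have := h (k + 1) (by omega)
      rwa [Nat.testBit_succ] at this)
    have hp : 2 ^ (n + 1 + 1) = 2 * 2 ^ (n + 1) := by ring
    omega

/-- The switch configuration encoding counter value `m` (train at `C₀`). -/
def sig (n m : ℕ) : Sum (Fin (n + 1)) Bool → Bool
  | Sum.inl i => m.testBit i
  | Sum.inr false => decide ((m + 1) / 2 % 2 = 1)
  | Sum.inr true => false

/-- The switch configuration when the train has climbed to `C_i`, clearing bits `< i`. -/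
def sigC (n m i : ℕ) : Sum (Fin (n + 1)) Bool → Bool
  | Sum.inl k => decide (i ≤ (k : ℕ)) && m.testBit k
  | Sum.inr false => decide ((m + 1) / 2 % 2 = 1)
  | Sum.inr true => false

section

variable (n : ℕ) (s0 s1 : Sum (Fin (n + 1)) Bool → Sum (Fin (n + 1)) Bool)

lemma climb
    (h3 : ∀ i : Fin (n + 1), ∀ h : (i : ℕ) < n,
      s1 (Sum.inl i) = Sum.inl ⟨(i : ℕ) + 1, Nat.succ_lt_succ h⟩)
    (t m : ℕ) (ht : run s0 s1 (Sum.inl 0) t = (Sum.inl 0, sig n m)) :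
    ∀ i, ∀ _hi : i ≤ n, (∀ k < i, m.testBit k = true) →
      run s0 s1 (Sum.inl 0) (t + i) = (Sum.inl ⟨i, by omega⟩, sigC n m i) := by
  intro i
  induction i with
  | zero =>
    intro _ _
    have ht' : run s0 s1 (Sum.inl 0) (t + 0) = (Sum.inl 0, sig n m) := ht
    rw [ht']
    refine Prod.ext ?_ ?_
    · simp
    · funext w
      rcases w with k | b
      · simp [sig, sigC]
      · rcases b <;> rfl
  | succ i ih =>
    intro hi hb
    have hrec := ih (by omega) (fun k hk => hb k (by omega))
    rw [show t + (i + 1) = (t + i) + 1 from rfl, run_succ, hrec, step_apply]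
    have hbit : sigC n m i (Sum.inl ⟨i, by omega⟩) = true := by
      simp [sigC, hb i (by omega)]
    have hs1 : s1 (Sum.inl ⟨i, by omega⟩) = Sum.inl ⟨i + 1, by omega⟩ :=
      h3 ⟨i, by omega⟩ (by simpa using (show i < n by omega))
    rw [hbit]
    refine Prod.ext ?_ ?_
    · simp [hs1]
    · show Function.update (sigC n m i) (Sum.inl ⟨i, by omega⟩) (!true) = sigC n m (i + 1)
      funext w
      rcases w with k | b
      · rw [Function.update_apply]
        by_cases hk : (k : ℕ) = i
        · have : k = (⟨i, by omega⟩ : Fin (n + 1)) := Fin.ext hk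
          simp [this, sigC, hb i (by omega)]
        · rw [if_neg (by simp [Fin.ext_iff, hk])]
          have he : decide (i ≤ (k : ℕ)) = decide (i + 1 ≤ (k : ℕ)) := by
            simp only [decide_eq_decide]; omega
          simp [sigC, he]
      · rw [Function.update_of_ne (by simp)]
        rcases b <;> rfl

lemma inc
    (h1 : s0 (Sum.inl 0) = Sum.inr false)
    (h2 : ∀ i : Fin (n + 1), i ≠ 0 → s0 (Sum.inl i) = Sum.inl 0)
    (h3 : ∀ i : Fin (n + 1), ∀ h : (i : ℕ) < n,
      s1 (Sum.inl i) = Sum.inl ⟨(i : ℕ) + 1, Nat.succ_lt_succ h⟩)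
    (h5 : s0 (Sum.inr false) = Sum.inl 0) (h6 : s1 (Sum.inr false) = Sum.inl 0)
    (t m : ℕ) (hm : m < 2 ^ (n + 1) - 1)
    (ht : run s0 s1 (Sum.inl 0) t = (Sum.inl 0, sig n m)) :
    ∃ t', t < t' ∧ run s0 s1 (Sum.inl 0) t' = (Sum.inl 0, sig n (m + 1)) ∧
      ∀ k, t ≤ k → k < t' → (run s0 s1 (Sum.inl 0) k).1 ≠ Sum.inr true := by
  have hpow : 1 ≤ 2 ^ (n + 1) := Nat.one_le_two_pow
  have hex : ∃ j, m.testBit j = false :=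
    ⟨n + 1, Nat.testBit_lt_two_pow (by omega)⟩
  set j := Nat.find hex with hjdef
  have hjf : m.testBit j = false := Nat.find_spec hex
  have hjt : ∀ k < j, m.testBit k = true := fun k hk => by
    have := Nat.find_min hex hk
    simpa using this
  have hjn : j ≤ n := by
    by_contra h
    push_neg at h
    have := ge_of_allbits n m (fun k hk => hjt k (by omega))
    omega
  have tbs := tb_succ j m hjt hjf
  rcases Nat.eq_zero_or_pos j with hj0 | hj0
  · -- m even : C₀ → A → C₀
    have hm2 : m % 2 = 0 := by
      rw [hj0, Nat.testBit_zero] at hjf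
      simp at hjf; omega
    have hb0 : sig n m (Sum.inl 0) = false := by
      show m.testBit ((0 : Fin (n + 1)) : ℕ) = false
      simp [Nat.testBit_zero, hm2]
    have e1 : run s0 s1 (Sum.inl 0) (t + 1) =
        (Sum.inr false, Function.update (sig n m) (Sum.inl 0) true) := by
      rw [run_succ, ht, step_apply, hb0]
      refine Prod.ext ?_ ?_
      · simp [h1]
      · show Function.update (sig n m) (Sum.inl 0) (!false) = _
        rfl
    refine ⟨t + 2, by omega, ?_, ?_⟩
    · rw [show t + 2 = (t + 1) + 1 from rfl, run_succ, e1, step_apply]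
      have hA : Function.update (sig n m) (Sum.inl 0) true (Sum.inr false) =
          sig n m (Sum.inr false) := by
        rw [Function.update_of_ne (by simp)]
      rw [hA]
      refine Prod.ext ?_ ?_
      · show (if sig n m (Sum.inr false) then s1 (Sum.inr false)
            else s0 (Sum.inr false)) = _
        rcases hv : sig n m (Sum.inr false) <;> simp [hv, h5, h6]
      · show Function.update (Function.update (sig n m) (Sum.inl 0) true)
            (Sum.inr false) (!sig n m (Sum.inr false)) = sig n (m + 1)
        funext w
        rcases w with k | b
        · rw [Function.update_of_ne (by simp), Function.update_apply]
          have hrhs : sig n (m + 1) (Sum.inl k) = (m + 1).testBit k := rfl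
          rw [hrhs, tbs k, hj0]
          by_cases hk : (k : ℕ) = 0
          · have : k = 0 := by
              apply Fin.ext
              simpa using hk
            simp [this, hk]
          · rw [if_neg (by simp only [Sum.inl.injEq]; intro h; exact hk (by rw [h, Fin.val_zero]))]
            have : sig n m (Sum.inl k) = m.testBit k := rfl
            rw [this]
            have hd1 : decide ((k : ℕ) = 0) = false := by simpa using hk
            have hd2 : decide (0 < (k : ℕ)) = true := by simp only [decide_eq_true_eq]; omega
            rw [hd1, hd2]
            simp
        · rcases b
          · rw [Function.update_self]
            show _ = decide ((m + 1 + 1) / 2 % 2 = 1)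
            have hx1 : (m + 1) / 2 = m / 2 := by omega
            have hx2 : (m + 1 + 1) / 2 = m / 2 + 1 := by omega
            show (!sig n m (Sum.inr false)) = _
            have : sig n m (Sum.inr false) = decide (m / 2 % 2 = 1) := by
              show decide ((m + 1) / 2 % 2 = 1) = _
              rw [hx1]
            rw [this, hx2]
            rcases hpar : Nat.mod_two_eq_zero_or_one (m / 2) with hh | hh
            · have : (m / 2 + 1) % 2 = 1 := by omega
              simp [hh, this]
            · have : (m / 2 + 1) % 2 = 0 := by omega
              simp [hh, this]
          · rw [Function.update_of_ne (by simp), Function.update_of_ne (by simp)]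
            rfl
    · intro k hk1 hk2
      have : k = t ∨ k = t + 1 := by omega
      rcases this with h | h
      · rw [h, ht]; simp
      · rw [h, e1]; simp
  · -- m odd with j ≥ 1 trailing ones : climb to C_j then back to C₀
    have hcl := climb n s0 s1 h3 t m ht
    have e1 := hcl j hjn hjt
    refine ⟨t + j + 1, by omega, ?_, ?_⟩
    · rw [show t + j + 1 = (t + j) + 1 from rfl, run_succ, e1, step_apply]
      have hbit : sigC n m j (Sum.inl ⟨j, by omega⟩) = false := by
        simp [sigC, hjf]
      have hs0 : s0 (Sum.inl ⟨j, by omega⟩) = Sum.inl 0 :=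
        h2 _ (by simp [Fin.ext_iff]; omega)
      rw [hbit]
      refine Prod.ext ?_ ?_
      · simp [hs0]
      · show Function.update (sigC n m j) (Sum.inl ⟨j, by omega⟩) (!false) = sig n (m + 1)
        funext w
        rcases w with k | b
        · rw [Function.update_apply]
          have hrhs : sig n (m + 1) (Sum.inl k) = (m + 1).testBit k := rfl
          rw [hrhs, tbs k]
          by_cases hk : (k : ℕ) = j
          · rw [if_pos (by simp [Fin.ext_iff, hk])]
            simp [hk]
          · rw [if_neg (by simp [Fin.ext_iff, hk])]
            have hd1 : decide ((k : ℕ) = j) = false := by simpa using hk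
            have hd2 : decide (j ≤ (k : ℕ)) = decide (j < (k : ℕ)) := by
              simp only [decide_eq_decide]; omega
            show (decide (j ≤ (k : ℕ)) && m.testBit k) = _
            rw [hd1, hd2]
            simp
        · rw [Function.update_of_ne (by simp)]
          rcases b
          · have hmo : m % 2 = 1 := by
              have := hjt 0 hj0
              rw [Nat.testBit_zero] at this
              simpa using this
            show decide ((m + 1) / 2 % 2 = 1) = decide ((m + 1 + 1) / 2 % 2 = 1)
            have : (m + 1 + 1) / 2 = (m + 1) / 2 := by omega
            rw [this]
          · rfl
    · intro k hk1 hk2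
      have hik : k - t ≤ j := by omega
      rw [show k = t + (k - t) by omega,
        hcl (k - t) (by omega) (fun l hl => hjt l (by omega))]
      simp

lemma reach
    (h1 : s0 (Sum.inl 0) = Sum.inr false)
    (h2 : ∀ i : Fin (n + 1), i ≠ 0 → s0 (Sum.inl i) = Sum.inl 0)
    (h3 : ∀ i : Fin (n + 1), ∀ h : (i : ℕ) < n,
      s1 (Sum.inl i) = Sum.inl ⟨(i : ℕ) + 1, Nat.succ_lt_succ h⟩)
    (h5 : s0 (Sum.inr false) = Sum.inl 0) (h6 : s1 (Sum.inr false) = Sum.inl 0) :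
    ∀ m ≤ 2 ^ (n + 1) - 1, ∃ t, run s0 s1 (Sum.inl 0) t = (Sum.inl 0, sig n m) ∧
      ∀ k < t, (run s0 s1 (Sum.inl 0) k).1 ≠ Sum.inr true := by
  intro m
  induction m with
  | zero =>
    intro _
    refine ⟨0, ?_, by omega⟩
    show ((Sum.inl 0 : Sum (Fin (n + 1)) Bool), fun _ => false) = _
    refine Prod.ext rfl ?_
    funext w
    rcases w with k | b
    · simp [sig]
    · rcases b <;> simp [sig]
  | succ m ih =>
    intro hm
    obtain ⟨t, ht, hB⟩ := ih (by omega)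
    obtain ⟨t', ht1', ht2', ht3'⟩ := inc n s0 s1 h1 h2 h3 h5 h6 t m (by omega) ht
    refine ⟨t', ht2', fun k hk => ?_⟩
    by_cases hkt : k < t
    · exact hB k hkt
    · exact ht3' k (by omega) hk

end

/-- In the binary-counter switch graph (vertices `C₀, …, C_n` coded `Sum.inl i`,
`A` coded `Sum.inr false`, `B` coded `Sum.inr true`, `n ≥ 1`), at the first step `N`
at which the train run from `C₀` has position `B`, every switch is back to state `0`. -/
theorem counter_switches_reset (n : ℕ) (hn : 1 ≤ n)
    (s0 s1 : Sum (Fin (n + 1)) Bool → Sum (Fin (n + 1)) Bool)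
    (h1 : s0 (Sum.inl 0) = Sum.inr false)
    (h2 : ∀ i : Fin (n + 1), i ≠ 0 → s0 (Sum.inl i) = Sum.inl 0)
    (h3 : ∀ i : Fin (n + 1), ∀ h : (i : ℕ) < n,
      s1 (Sum.inl i) = Sum.inl ⟨(i : ℕ) + 1, by omega⟩)
    (h4 : s1 (Sum.inl ⟨n, Nat.lt_succ_self n⟩) = Sum.inr true)
    (h5 : s0 (Sum.inr false) = Sum.inl 0) (h6 : s1 (Sum.inr false) = Sum.inl 0)
    (h7 : s0 (Sum.inr true) = Sum.inr true) (h8 : s1 (Sum.inr true) = Sum.inr true)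
    (N : ℕ) (hN : (run s0 s1 (Sum.inl 0) N).1 = Sum.inr true)
    (hfirst : ∀ k < N, (run s0 s1 (Sum.inl 0) k).1 ≠ Sum.inr true) :
    ∀ w, (run s0 s1 (Sum.inl 0) N).2 w = false := by
  have hpow : 1 ≤ 2 ^ (n + 1) := Nat.one_le_two_pow
  set M := 2 ^ (n + 1) - 1 with hM
  obtain ⟨t, ht, hB⟩ := reach n s0 s1 h1 h2 h3 h5 h6 M le_rfl
  have hbits : ∀ k ≤ n, M.testBit k = true := fun k hk => by
    rw [hM, Nat.testBit_two_pow_sub_one]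
    simp; omega
  have hcl := climb n s0 s1 h3 t M ht
  have e1 := hcl n le_rfl (fun k hk => hbits k (by omega))
  have eN : run s0 s1 (Sum.inl 0) (t + n + 1) = (Sum.inr true, fun _ => false) := by
    rw [show t + n + 1 = (t + n) + 1 from rfl, run_succ, e1, step_apply]
    have hbit : sigC n M n (Sum.inl ⟨n, by omega⟩) = true := by
      simp [sigC, hbits n le_rfl]
    have hs1 : s1 (Sum.inl ⟨n, by omega⟩) = Sum.inr true := h4
    rw [hbit]
    refine Prod.ext ?_ ?_
    · simp [hs1]
    · show Function.update (sigC n M n) (Sum.inl ⟨n, by omega⟩) (!true) = _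
      funext w
      rcases w with k | b
      · rw [Function.update_apply]
        by_cases hk : (k : ℕ) = n
        · rw [if_pos (by simp [Fin.ext_iff, hk])]
          simp
        · rw [if_neg (by simp [Fin.ext_iff, hk])]
          have hkn : (k : ℕ) < n := by have := k.isLt; omega
          show (decide (n ≤ (k : ℕ)) && M.testBit k) = false
          have : decide (n ≤ (k : ℕ)) = false := by simp; omega
          rw [this]
          simp
      · rw [Function.update_of_ne (by simp)]
        rcases b
        · show decide ((M + 1) / 2 % 2 = 1) = false
          have hM1 : M + 1 = 2 ^ n * 2 := by
            rw [hM, pow_succ]; omega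
          have hdiv : (M + 1) / 2 = 2 ^ n := by
            rw [hM1, Nat.mul_div_cancel _ (by norm_num)]
          have hmod : 2 ^ n % 2 = 0 := by
            have : 2 ^ n = 2 * 2 ^ (n - 1) := by
              rw [← pow_succ']
              congr 1
              omega
            omega
          rw [hdiv]
          simp [hmod]
        · rfl
  have hBn : ∀ k < t + n + 1, (run s0 s1 (Sum.inl 0) k).1 ≠ Sum.inr true := by
    intro k hk
    by_cases h : k < t
    · exact hB k h
    · rw [show k = t + (k - t) by omega,
        hcl (k - t) (by omega) (fun l hl => hbits l (by omega))]
      simp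
  have hNe : N = t + n + 1 := by
    rcases lt_trichotomy N (t + n + 1) with h | h | h
    · exact absurd hN (hBn N h)
    · exact h
    · exact absurd (by rw [eN] : (run s0 s1 (Sum.inl 0) (t + n + 1)).1 = Sum.inr true)
        (hfirst (t + n + 1) h)
  intro w
  rw [hNe, eN]
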